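/- Let 0 < a < b and M > 1. Then there exists a constant C > 0, depending only on a, b and M, such that for every h ∈ (0, 1], the number of pairs (k, k') of positive integers satisfying a ≤ h² k k' ≤ b and 1/M ≤ k/k' ≤ M is at most C · h^{−2}. -/
import Mathlib


/-- Lattice point count between two hyperbolas inside a proper cone: for `0 < a < b` and
`M > 1`, the number of pairs `(k,k')` of positive integers with `a ≤ h²kk' ≤ b` and
`1/M ≤ k/k' ≤ M` is at most `C·h^{−2}`, with `C` depending only on `a, b, M`. -/
theorem lattice_count_cone (a b M : ℝ) (ha : 0 < a) (hab : a < b) (hM : 1 < M) :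
    ∃ C : ℝ, 0 < C ∧ ∀ h : ℝ, h ∈ Set.Ioc (0 : ℝ) 1 →
      ((((Finset.range (⌊b / h ^ 2⌋₊ + 1) ×ˢ Finset.range (⌊b / h ^ 2⌋₊ + 1)).filter
          (fun p => 1 ≤ p.1 ∧ 1 ≤ p.2 ∧
            a ≤ h ^ 2 * ((p.1 * p.2 : ℕ) : ℝ) ∧ h ^ 2 * ((p.1 * p.2 : ℕ) : ℝ) ≤ b ∧
            1 / M ≤ (p.1 : ℝ) / (p.2 : ℝ) ∧ (p.1 : ℝ) / (p.2 : ℝ) ≤ M)).card : ℕ) : ℝ)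
      ≤ C / h ^ 2 := by
  have hb : 0 < b := ha.trans hab
  have hM0 : 0 < M := lt_trans one_pos hM
  refine ⟨M * b, by positivity, fun h hh => ?_⟩
  obtain ⟨hh0, hh1⟩ := hh
  set K := ⌊Real.sqrt (M * b) / h⌋₊ with hK
  have hKle : (K : ℝ) ≤ Real.sqrt (M * b) / h := Nat.floor_le (by positivity)
  have hsub : ((Finset.range (⌊b / h ^ 2⌋₊ + 1) ×ˢ Finset.range (⌊b / h ^ 2⌋₊ + 1)).filter
          (fun p => 1 ≤ p.1 ∧ 1 ≤ p.2 ∧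
            a ≤ h ^ 2 * ((p.1 * p.2 : ℕ) : ℝ) ∧ h ^ 2 * ((p.1 * p.2 : ℕ) : ℝ) ≤ b ∧
            1 / M ≤ (p.1 : ℝ) / (p.2 : ℝ) ∧ (p.1 : ℝ) / (p.2 : ℝ) ≤ M))
      ⊆ (Finset.Icc 1 K) ×ˢ (Finset.Icc 1 K) := by
    intro p hp
    simp only [Finset.mem_filter, Finset.mem_product, Finset.mem_range, Finset.mem_Icc] at hp ⊢
    obtain ⟨-, h1, h2, -, hbb, hlo, hhi⟩ := hp
    have hp1 : (0:ℝ) < p.1 := by exact_mod_cast h1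
    have hp2 : (0:ℝ) < p.2 := by exact_mod_cast h2
    push_cast at hbb
    have h12 : (p.1:ℝ) ≤ M * p.2 := (div_le_iff₀ hp2).mp hhi
    have h21 : (p.2:ℝ) ≤ M * p.1 := by
      have := (div_le_div_iff₀ hM0 hp2).mp hlo
      nlinarith
    -- bound p.1
    have hb1 : (h * p.1) ^ 2 ≤ M * b := by nlinarith
    have hb2 : (h * p.2) ^ 2 ≤ M * b := by nlinarith
    have hs1 : h * p.1 ≤ Real.sqrt (M * b) := by
      have := Real.sqrt_le_sqrt hb1
      rwa [Real.sqrt_sq (by positivity)] at this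
    have hs2 : h * p.2 ≤ Real.sqrt (M * b) := by
      have := Real.sqrt_le_sqrt hb2
      rwa [Real.sqrt_sq (by positivity)] at this
    constructor
    · exact ⟨h1, Nat.le_floor (by rw [le_div_iff₀ hh0]; linarith [hs1])⟩
    · exact ⟨h2, Nat.le_floor (by rw [le_div_iff₀ hh0]; linarith [hs2])⟩
  have hcard := Finset.card_le_card hsub
  rw [Finset.card_product, Nat.card_Icc] at hcard
  simp only [Nat.add_sub_cancel] at hcard
  calc ((((Finset.range (⌊b / h ^ 2⌋₊ + 1) ×ˢ Finset.range (⌊b / h ^ 2⌋₊ + 1)).filter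
          (fun p => 1 ≤ p.1 ∧ 1 ≤ p.2 ∧
            a ≤ h ^ 2 * ((p.1 * p.2 : ℕ) : ℝ) ∧ h ^ 2 * ((p.1 * p.2 : ℕ) : ℝ) ≤ b ∧
            1 / M ≤ (p.1 : ℝ) / (p.2 : ℝ) ∧ (p.1 : ℝ) / (p.2 : ℝ) ≤ M)).card : ℕ) : ℝ)
      ≤ ((K * K : ℕ) : ℝ) := by exact_mod_cast hcard
    _ = (K:ℝ) * K := by push_cast; ring
    _ ≤ (Real.sqrt (M * b) / h) * (Real.sqrt (M * b) / h) := by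
        have : (0:ℝ) ≤ K := Nat.cast_nonneg _
        exact mul_le_mul hKle hKle this (by positivity)
    _ = (Real.sqrt (M * b))^2 / h ^ 2 := by ring
    _ = M * b / h ^ 2 := by rw [Real.sq_sqrt (by positivity)]
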